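/- arXiv:math/0307296 — 6 statements merged into one kernel-verified Lean document; each statement's English description precedes it below -/
import Mathlib

section
/- Let σ : 𝔽₄ → 𝔽₄ be the Frobenius automorphism x ↦ x² and let B = [[1,ζ],[0,ζ]] ∈ GL(2,𝔽₄). The semilinear map v ↦ B·σ(v) (Frobenius applied coordinatewise, then multiplication by B) permutes the set {P₁,…,P₅} by the 4-cycle (2 4 5 3): it fixes P₁ and sends P₂ ↦ P₄, P₄ ↦ P₅, P₅ ↦ P₃, P₃ ↦ P₂. -/
/-!
Frobenius fixes `0` and `1` and sends `ζ` to `ζ² = ζ + 1`, and `ζ (ζ + 1) = ζ³ = 1`;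
with these, each of the five images is a direct computation in characteristic 2.
-/

open Matrix

/-- With `σ : 𝔽₄ → 𝔽₄` the Frobenius automorphism `x ↦ x²` and `B = [[1,ζ],[0,ζ]]`,
the semilinear map `v ↦ B·σ(v)` (Frobenius applied coordinatewise, then multiplication
by `B`) permutes `{P₁,…,P₅}` by the 4-cycle `(2 4 5 3)`: it fixes `P₁` and sends
`P₂ ↦ P₄`, `P₄ ↦ P₅`, `P₅ ↦ P₃`, `P₃ ↦ P₂`.
(Below, indices are `0`-based: `P 0 = P₁`, …, `P 4 = P₅`.) -/
theorem stmt_2 (ζ : GaloisField 2 2) (hζ : ζ ^ 2 = ζ + 1) :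
    let B : Matrix (Fin 2) (Fin 2) (GaloisField 2 2) := !![1, ζ; 0, ζ]
    let P : Fin 5 → (Fin 2 → GaloisField 2 2) :=
      ![![1, 0], ![0, 1], ![1, ζ], ![ζ, ζ], ![ζ, 1]]
    let f : (Fin 2 → GaloisField 2 2) → (Fin 2 → GaloisField 2 2) :=
      fun v => B *ᵥ (fun i => (v i) ^ 2)
    f (P 0) = P 0 ∧ f (P 1) = P 3 ∧ f (P 3) = P 4 ∧ f (P 4) = P 2 ∧ f (P 2) = P 1 := by
  intro B P f
  have hf (x y : GaloisField 2 2) : f ![x, y] = ![x ^ 2 + ζ * y ^ 2, ζ * y ^ 2] := by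
    ext i; fin_cases i <;> simp [f, B, dotProduct, Fin.sum_univ_two]
  simp only [P, cons_val, hf]
  -- `grind` knows that `GaloisField 2 2` has characteristic 2
  refine ⟨?_, ?_, ?_, ?_, ?_⟩ <;> refine vec2_eq ?_ ?_ <;> grind
end

section
/- For every automorphism φ of the line combinatorics 𝒞 there exists a unique permutation σ ∈ S₅ such that φ(L_i) = L_{σ(i)} and φ(M_i) = M_{σ(i)} for all i = 1,…,5. Moreover, the resulting map Aut(𝒞) → S₅, φ ↦ σ, is an injective group homomorphism. -/
/-! The line combinatorics `𝒞`. Lines are indexed by `Fin 5 ⊕ Fin 5`, where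
`Sum.inl i` is the line `L_{i+1}` and `Sum.inr i` is the line `M_{i+1}`
(`0`-based indices for the paper's `1`-based labels). -/

/-- The ten lines of the combinatorics `𝒞`: `Sum.inl i = L_{i+1}`, `Sum.inr i = M_{i+1}`. -/
abbrev LineC := Fin 5 ⊕ Fin 5

/-- The table `T` of concurrent triples `{M_i, L_j, L_k}` (0-based indices): it encodes
`(1,{2,5}), (1,{3,4}), (2,{1,3}), (2,{4,5}), (3,{1,5}), (3,{2,4}), (4,{1,2}),
(4,{3,5}), (5,{1,4}), (5,{2,3})` in the paper's 1-based labels. -/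
def TTable : List (Fin 5 × Fin 5 × Fin 5) :=
  [(0,1,4), (0,2,3), (1,0,2), (1,3,4), (2,0,4), (2,1,3), (3,0,1), (3,2,4), (4,0,3), (4,1,2)]

/-- `Conc a b c` holds iff `a`, `b`, `c` are three distinct lines of `𝒞` which are
concurrent: either all three are of type `M` (all of `M₁,…,M₅` pass through the common
point `O`), or `{a,b,c} = {M_i, L_j, L_k}` for a triple `(i,{j,k})` in the table `T`. -/
def Conc (a b c : LineC) : Prop :=
  a ≠ b ∧ a ≠ c ∧ b ≠ c ∧
    ((∃ i j k, a = Sum.inr i ∧ b = Sum.inr j ∧ c = Sum.inr k) ∨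
     (∃ i j k, (i, j, k) ∈ TTable ∧
        ({a, b, c} : Finset LineC) = {Sum.inr i, Sum.inl j, Sum.inl k}))

/-- An automorphism of the line combinatorics `𝒞` is a bijection of the ten lines such
that any three lines are concurrent iff their images are concurrent. -/
def IsAut (φ : Equiv.Perm LineC) : Prop :=
  ∀ a b c, Conc a b c ↔ Conc (φ a) (φ b) (φ c)

/-! The `M`-lines are exactly the lines through a point where at least four lines meet
(the point `O`), so an automorphism maps `L`-lines to `L`-lines and `M`-lines to `M`-lines,
say by permutations `l` and `m` of the indices. Reading off `T`, the line `L_j` lies in a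
concurrent triple with `M_i` iff `i ≠ j`; applying `φ` to this relation gives `m i = l i`. -/

theorem conc_iff_exists_mem_tTable (a b c : LineC) :
    Conc a b c ↔ a ≠ b ∧ a ≠ c ∧ b ≠ c ∧
      ((a.isRight ∧ b.isRight ∧ c.isRight) ∨
        ∃ t ∈ TTable,
          ({a, b, c} : Finset LineC) = {Sum.inr t.1, Sum.inl t.2.1, Sum.inl t.2.2}) := by
  simp only [Conc, Prod.exists, Sum.isRight_iff, exists_and_left, exists_and_right]

-- Quantifying over the ten entries of `T` rather than over `Fin 5 ^ 3` keeps `decide` fast.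
instance (a b c : LineC) : Decidable (Conc a b c) :=
  decidable_of_iff' _ (conc_iff_exists_mem_tTable a b c)

def OnQuadruplePoint (a : LineC) : Prop :=
  ∃ b c d, Conc a b c ∧ Conc a b d ∧ Conc a c d ∧ Conc b c d

instance : DecidablePred OnQuadruplePoint := fun a => by
  unfold OnQuadruplePoint; infer_instance

theorem onQuadruplePoint_iff_isRight : ∀ a, OnQuadruplePoint a ↔ a.isRight := by decide

theorem exists_conc_inr_inl_inl_iff_ne : ∀ i j : Fin 5,
    (∃ k, Conc (Sum.inr i) (Sum.inl j) (Sum.inl k)) ↔ i ≠ j := by decide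

namespace IsAut

variable {φ : Equiv.Perm LineC}

theorem symm (hφ : IsAut φ) : IsAut φ.symm := fun a b c => by
  simpa using (hφ (φ.symm a) (φ.symm b) (φ.symm c)).symm

theorem onQuadruplePoint_apply (hφ : IsAut φ) {a : LineC} (ha : OnQuadruplePoint a) :
    OnQuadruplePoint (φ a) := by
  obtain ⟨b, c, d, habc, habd, hacd, hbcd⟩ := ha
  exact ⟨φ b, φ c, φ d, (hφ ..).mp habc, (hφ ..).mp habd, (hφ ..).mp hacd, (hφ ..).mp hbcd⟩

theorem isRight_apply_iff (hφ : IsAut φ) (a : LineC) : (φ a).isRight ↔ a.isRight := by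
  simp only [← onQuadruplePoint_iff_isRight]
  refine ⟨fun h => ?_, hφ.onQuadruplePoint_apply⟩
  simpa using hφ.symm.onQuadruplePoint_apply h

theorem mapsTo_range_inl (hφ : IsAut φ) :
    Set.MapsTo φ (Set.range Sum.inl) (Set.range Sum.inl) := by
  rintro _ ⟨i, rfl⟩
  rcases hi : φ (Sum.inl i) with j | j
  · exact ⟨j, rfl⟩
  · simpa [hi] using hφ.isRight_apply_iff (Sum.inl i)

theorem exists_eq_sumCongr (hφ : IsAut φ) : ∃ l m : Equiv.Perm (Fin 5), φ = l.sumCongr m := by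
  obtain ⟨⟨l, m⟩, h⟩ := Equiv.Perm.mem_sumCongrHom_range_of_perm_mapsTo_inl hφ.mapsTo_range_inl
  exact ⟨l, m, h.symm⟩

theorem exists_eq_sumCongr_self (hφ : IsAut φ) : ∃ σ : Equiv.Perm (Fin 5), φ = σ.sumCongr σ := by
  obtain ⟨l, m, rfl⟩ := hφ.exists_eq_sumCongr
  suffices hml : ∀ i j, m i = l j ↔ i = j by
    exact ⟨l, congrArg _ (Equiv.ext fun i => (hml i i).mpr rfl)⟩
  intro i j
  have h : (∃ k, Conc (Sum.inr i) (Sum.inl j) (Sum.inl k)) ↔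
      ∃ k, Conc (Sum.inr (m i)) (Sum.inl (l j)) (Sum.inl k) :=
    (exists_congr fun k => hφ _ _ _).trans
      (l.surjective.exists (p := fun k => Conc (.inr (m i)) (.inl (l j)) (.inl k))).symm
  simpa only [exists_conc_inr_inl_inl_iff_ne, not_iff_not] using h.symm

end IsAut

/-- For every automorphism `φ` of `𝒞` there is a unique permutation `σ ∈ S₅` with
`φ(L_i) = L_{σ(i)}` and `φ(M_i) = M_{σ(i)}` for all `i`; moreover `φ ↦ σ` is a group
homomorphism (composition goes to composition) and it is injective. -/
theorem stmt_3 :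
    (∀ φ : Equiv.Perm LineC, IsAut φ →
      ∃! σ : Equiv.Perm (Fin 5),
        (∀ i, φ (Sum.inl i) = Sum.inl (σ i)) ∧ (∀ i, φ (Sum.inr i) = Sum.inr (σ i))) ∧
    (∀ φ ψ : Equiv.Perm LineC, ∀ σ τ : Equiv.Perm (Fin 5),
      IsAut φ → IsAut ψ →
      (∀ i, φ (Sum.inl i) = Sum.inl (σ i)) → (∀ i, φ (Sum.inr i) = Sum.inr (σ i)) →
      (∀ i, ψ (Sum.inl i) = Sum.inl (τ i)) → (∀ i, ψ (Sum.inr i) = Sum.inr (τ i)) →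
      (∀ i, (φ.trans ψ) (Sum.inl i) = Sum.inl ((τ * σ) i)) ∧
      (∀ i, (φ.trans ψ) (Sum.inr i) = Sum.inr ((τ * σ) i))) ∧
    (∀ φ ψ : Equiv.Perm LineC, ∀ σ : Equiv.Perm (Fin 5),
      IsAut φ → IsAut ψ →
      (∀ i, φ (Sum.inl i) = Sum.inl (σ i)) → (∀ i, φ (Sum.inr i) = Sum.inr (σ i)) →
      (∀ i, ψ (Sum.inl i) = Sum.inl (σ i)) → (∀ i, ψ (Sum.inr i) = Sum.inr (σ i)) →
      φ = ψ) := by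
  refine ⟨fun φ hφ => ?_, fun φ ψ σ τ _ _ hφl hφr hψl hψr => ?_,
    fun φ ψ σ _ _ hφl hφr hψl hψr => ?_⟩
  · obtain ⟨σ, rfl⟩ := hφ.exists_eq_sumCongr_self
    exact ⟨σ, ⟨fun _ => rfl, fun _ => rfl⟩,
      fun τ hτ => Equiv.ext fun i => (Sum.inl_injective (hτ.1 i)).symm⟩
  · exact ⟨fun i => by simp [hφl, hψl], fun i => by simp [hφr, hψr]⟩
  · ext (i | i)
    · rw [hφl, hψl]
    · rw [hφr, hψr]
end

section
/- If φ is an automorphism of the line combinatorics 𝒞 with φ(M₁) = M₁ and φ(M₂) = M₂, then φ is the identity. -/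
/-! An automorphism fixing `M₁` and `M₂` also fixes `L₁` and `L₂`: apart from `M_i` itself,
`L_i` is the only line lying in no concurrent triple together with `M_i`. A line that is the
unique third member of a concurrent triple through two fixed lines is fixed as well. Through
`(M₁, L₂)`, `(M₂, L₁)` and `(M₁, L₃)` this fixes `L₅`, `L₃`, `L₄`, and then every `M_i` is the
unique third line through a suitable pair of `L`-lines. -/

instance inst_s7 (a b c : LineC) : Decidable (Conc a b c) := by
  unfold Conc; infer_instance

open Sum

theorem not_exists_conc_inr_iff (i : Fin 5) (b : LineC) :
    (¬∃ c, Conc (inr i) b c) ↔ b = inr i ∨ b = inl i := by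
  revert i b; decide +kernel

theorem conc_inr_inl_iff_of_mem :
    ∀ p ∈ TTable, ∀ c, Conc (inr p.1) (inl p.2.1) c ↔ c = inl p.2.2 := by
  decide +kernel

theorem exists_conc_inl_inl_iff_eq_inr (i : Fin 5) :
    ∃ j k, ∀ c, Conc (inl j) (inl k) c ↔ c = inr i := by
  revert i; decide +kernel

namespace IsAut

variable {φ : Equiv.Perm LineC} {a b c : LineC}

theorem apply_eq_of_conc_iff (hφ : IsAut φ) (ha : φ a = a) (hb : φ b = b)
    (hc : ∀ x, Conc a b x ↔ x = c) : φ c = c :=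
  (hc _).1 <| by simpa only [ha, hb] using (hφ a b c).1 ((hc c).2 rfl)

theorem apply_eq_of_not_exists_conc_iff (hφ : IsAut φ) (ha : φ a = a)
    (hb : ∀ x, (¬∃ c, Conc a x c) ↔ x = a ∨ x = b) : φ b = b := by
  have hφb : ¬∃ c, Conc a (φ b) c := by
    rintro ⟨c, hc⟩
    refine (hb b).2 (Or.inr rfl) ⟨φ.symm c, (hφ _ _ _).2 ?_⟩
    rwa [ha, φ.apply_symm_apply]
  rcases (hb _).1 hφb with h | h
  · rw [φ.injective (h.trans ha.symm), ha]
  · exact h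

end IsAut

/-- If an automorphism `φ` of the line combinatorics `𝒞` satisfies `φ(M₁) = M₁` and
`φ(M₂) = M₂`, then `φ` is the identity. -/
theorem stmt_7 (φ : Equiv.Perm LineC) (hφ : IsAut φ)
    (h1 : φ (Sum.inr 0) = Sum.inr 0) (h2 : φ (Sum.inr 1) = Sum.inr 1) :
    φ = Equiv.refl LineC := by
  have hL0 := hφ.apply_eq_of_not_exists_conc_iff h1 (not_exists_conc_inr_iff 0)
  have hL1 := hφ.apply_eq_of_not_exists_conc_iff h2 (not_exists_conc_inr_iff 1)
  have hL4 := hφ.apply_eq_of_conc_iff h1 hL1 (conc_inr_inl_iff_of_mem (0, 1, 4) (by decide))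
  have hL2 := hφ.apply_eq_of_conc_iff h2 hL0 (conc_inr_inl_iff_of_mem (1, 0, 2) (by decide))
  have hL3 := hφ.apply_eq_of_conc_iff h1 hL2 (conc_inr_inl_iff_of_mem (0, 2, 3) (by decide))
  have hL : ∀ k, φ (inl k) = inl k := by
    intro k; fin_cases k <;> assumption
  have hM : ∀ i, φ (inr i) = inr i := fun i ↦
    have ⟨j, k, hjk⟩ := exists_conc_inl_inl_iff_eq_inr i
    hφ.apply_eq_of_conc_iff (hL j) (hL k) hjk
  ext (k | i)
  exacts [hL k, hM i]
end

section
/- The automorphism group Aut(𝒞) has order exactly 20; more precisely, every automorphism of 𝒞 is of the form L_i ↦ L_{ρ(i)}, M_i ↦ M_{ρ(i)} for a unique ρ in the subgroup G of S₅ generated by the 5-cycle (1 2 3 4 5) and the 4-cycle (2 4 5 3), and every such ρ ∈ G gives an automorphism. -/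
/-- The 5-cycle `(1 2 3 4 5)` of `{1,…,5}` (0-based: `i ↦ i+1` on `Fin 5`). -/
def sigmaPerm : Equiv.Perm (Fin 5) :=
  ⟨![1, 2, 3, 4, 0], ![4, 0, 1, 2, 3], by decide, by decide⟩

/-- The 4-cycle `(2 4 5 3)` of `{1,…,5}` (0-based: fixes `0`, sends `1↦3, 3↦4, 4↦2, 2↦1`). -/
def tauPerm : Equiv.Perm (Fin 5) :=
  ⟨![0, 3, 1, 4, 2], ![0, 2, 4, 1, 3], by decide, by decide⟩

def memTB (i j k : Fin 5) : Bool := decide ((i,j,k) ∈ TTable) || decide ((i,k,j) ∈ TTable)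

def ConcB : LineC → LineC → LineC → Bool
  | .inr i, .inr j, .inr k => decide (i ≠ j) && decide (i ≠ k) && decide (j ≠ k)
  | .inr i, .inl j, .inl k => memTB i j k
  | .inl j, .inr i, .inl k => memTB i j k
  | .inl j, .inl k, .inr i => memTB i j k
  | _, _, _ => false

set_option maxRecDepth 10000 in
theorem tne : ∀ p ∈ TTable, p.2.1 ≠ p.2.2 := by decide

theorem memTB_of_mem {i j k : Fin 5} (h : (i,j,k) ∈ TTable) : memTB i j k = true := by
  simp [memTB, h]

theorem memTB_of_mem' {i j k : Fin 5} (h : (i,k,j) ∈ TTable) : memTB i j k = true := by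
  simp [memTB, h]

theorem memTB_swap (i j k : Fin 5) : memTB i j k = memTB i k j := by
  simp [memTB, Bool.or_comm]

-- permuting the arguments of Conc
theorem conc_comm_left {a b c : LineC} (h : Conc a b c) : Conc b a c := by
  obtain ⟨h1, h2, h3, h4⟩ := h
  refine ⟨h1.symm, h3, h2, ?_⟩
  rcases h4 with ⟨i, j, k, ha, hb, hc⟩ | ⟨i, j, k, hT, hs⟩
  · exact Or.inl ⟨j, i, k, hb, ha, hc⟩
  · exact Or.inr ⟨i, j, k, hT, (Finset.insert_comm b a {c}).trans hs⟩

theorem conc_comm_right {a b c : LineC} (h : Conc a b c) : Conc a c b := by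
  obtain ⟨h1, h2, h3, h4⟩ := h
  refine ⟨h2, h1, h3.symm, ?_⟩
  rcases h4 with ⟨i, j, k, ha, hb, hc⟩ | ⟨i, j, k, hT, hs⟩
  · exact Or.inl ⟨i, k, j, ha, hc, hb⟩
  · refine Or.inr ⟨i, j, k, hT, ?_⟩
    rw [show ({a, c, b} : Finset LineC) = {a, b, c} by rw [Finset.pair_comm]]
    exact hs

-- the key characterization in the mixed case
theorem conc_rll (i j k : Fin 5) :
    Conc (Sum.inr i) (Sum.inl j) (Sum.inl k) ↔ memTB i j k = true := by
  constructor
  · rintro ⟨h1, h2, h3, ⟨i', j', k', ha, hb, hc⟩ | ⟨i', j', k', hT, hs⟩⟩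
    · exact absurd hb (by simp)
    · have hjk : j ≠ k := fun h => h3 (by rw [h])
      have hj'k' : j' ≠ k' := tne (i', j', k') hT
      have h5 := Finset.ext_iff.mp hs
      have hi := (h5 (Sum.inr i)).mp (by simp)
      have hj := (h5 (Sum.inl j)).mp (by simp)
      have hk := (h5 (Sum.inl k)).mp (by simp)
      simp only [Finset.mem_insert, Finset.mem_singleton, Sum.inr.injEq, Sum.inl.injEq,
        reduceCtorEq, false_or, or_false] at hi hj hk
      subst hi
      rcases hj with hj | hj <;> rcases hk with hk | hk
      · exact absurd (hj.trans hk.symm) hjk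
      · subst hj; subst hk; exact memTB_of_mem hT
      · subst hj; subst hk; exact memTB_of_mem' hT
      · exact absurd (hj.trans hk.symm) hjk
  · intro h
    have h' : (i, j, k) ∈ TTable ∨ (i, k, j) ∈ TTable := by
      simpa [memTB, Bool.or_eq_true, decide_eq_true_iff] using h
    rcases h' with hT | hT
    · have hjk : j ≠ k := tne (i, j, k) hT
      exact ⟨by simp, by simp, by simp [hjk], Or.inr ⟨i, j, k, hT, rfl⟩⟩
    · have hjk : k ≠ j := tne (i, k, j) hT
      refine ⟨by simp, by simp, by simp [hjk.symm], Or.inr ⟨i, k, j, hT, ?_⟩⟩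
      rw [Finset.pair_comm]
  
-- shape eliminations
theorem not_conc_lll (x y z : Fin 5) : ¬ Conc (Sum.inl x) (Sum.inl y) (Sum.inl z) := by
  rintro ⟨h1, h2, h3, ⟨i, j, k, ha, hb, hc⟩ | ⟨i, j, k, hT, hs⟩⟩
  · exact absurd ha (by simp)
  · have := (Finset.ext_iff.mp hs (Sum.inr i)).mpr (by simp)
    simp at this

theorem not_conc_rrl (x y : Fin 5) (z : Fin 5) : ¬ Conc (Sum.inr x) (Sum.inr y) (Sum.inl z) := by
  rintro ⟨h1, h2, h3, ⟨i, j, k, ha, hb, hc⟩ | ⟨i, j, k, hT, hs⟩⟩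
  · exact absurd hc (by simp)
  · have hj := (Finset.ext_iff.mp hs (Sum.inl j)).mpr (by simp)
    have hk := (Finset.ext_iff.mp hs (Sum.inl k)).mpr (by simp)
    simp only [Finset.mem_insert, Finset.mem_singleton, Sum.inl.injEq,
      reduceCtorEq, false_or] at hj hk
    exact tne (i, j, k) hT (hj.trans hk.symm)

theorem conc_rrr (i j k : Fin 5) :
    Conc (Sum.inr i) (Sum.inr j) (Sum.inr k) ↔ i ≠ j ∧ i ≠ k ∧ j ≠ k := by
  constructor
  · rintro ⟨h1, h2, h3, -⟩
    exact ⟨fun h => h1 (by rw [h]), fun h => h2 (by rw [h]), fun h => h3 (by rw [h])⟩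
  · rintro ⟨h1, h2, h3⟩
    exact ⟨by simp [h1], by simp [h2], by simp [h3], Or.inl ⟨i, j, k, rfl, rfl, rfl⟩⟩

theorem concB_iff : ∀ a b c, Conc a b c ↔ ConcB a b c = true := by
  rintro (x | x) (y | y) (z | z)
  · simpa [ConcB] using not_conc_lll x y z
  · constructor
    · intro h; exact (conc_rll z x y).mp (conc_comm_left (conc_comm_right h))
    · intro h; exact conc_comm_right (conc_comm_left ((conc_rll z x y).mpr h))
  · constructor
    · intro h; exact (conc_rll y x z).mp (conc_comm_left h)
    · intro h; exact conc_comm_left ((conc_rll y x z).mpr h)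
  · constructor
    · intro h; exact absurd (conc_comm_right (conc_comm_left h)) (not_conc_rrl y z x)
    · intro h; simp [ConcB] at h
  · exact conc_rll x y z
  · constructor
    · intro h; exact absurd (conc_comm_right h) (not_conc_rrl x z y)
    · intro h; simp [ConcB] at h
  · constructor
    · intro h; exact absurd h (not_conc_rrl x y z)
    · intro h; simp [ConcB] at h
  · simp only [ConcB, Bool.and_eq_true, decide_eq_true_iff]
    rw [conc_rrr]; tauto

def perm (f g : Fin 5 → Fin 5) (h1 : ∀ x, g (f x) = x := by decide)
    (h2 : ∀ x, f (g x) = x := by decide) : Equiv.Perm (Fin 5) := ⟨f, g, h1, h2⟩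

def Glist : List (Equiv.Perm (Fin 5)) := [
  perm ![0, 1, 2, 3, 4] ![0, 1, 2, 3, 4],
  perm ![0, 3, 1, 4, 2] ![0, 2, 4, 1, 3],
  perm ![0, 4, 3, 2, 1] ![0, 4, 3, 2, 1],
  perm ![0, 2, 4, 1, 3] ![0, 3, 1, 4, 2],
  perm ![1, 2, 3, 4, 0] ![4, 0, 1, 2, 3],
  perm ![1, 4, 2, 0, 3] ![3, 0, 2, 4, 1],
  perm ![1, 0, 4, 3, 2] ![1, 0, 4, 3, 2],
  perm ![1, 3, 0, 2, 4] ![2, 0, 3, 1, 4],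
  perm ![2, 3, 4, 0, 1] ![3, 4, 0, 1, 2],
  perm ![2, 0, 3, 1, 4] ![1, 3, 0, 2, 4],
  perm ![2, 1, 0, 4, 3] ![2, 1, 0, 4, 3],
  perm ![2, 4, 1, 3, 0] ![4, 2, 0, 3, 1],
  perm ![3, 4, 0, 1, 2] ![2, 3, 4, 0, 1],
  perm ![3, 1, 4, 2, 0] ![4, 1, 3, 0, 2],
  perm ![3, 2, 1, 0, 4] ![3, 2, 1, 0, 4],
  perm ![3, 0, 2, 4, 1] ![1, 4, 2, 0, 3],
  perm ![4, 0, 1, 2, 3] ![1, 2, 3, 4, 0],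
  perm ![4, 2, 0, 3, 1] ![2, 4, 1, 3, 0],
  perm ![4, 3, 2, 1, 0] ![4, 3, 2, 1, 0],
  perm ![4, 1, 3, 0, 2] ![3, 1, 4, 2, 0]]

def pairIdx (j k : Fin 5) : Fin 5 :=
  [0,3,1,4,2, 3,0,4,2,0, 1,4,0,0,3, 4,2,0,0,1, 2,0,3,1,0].getD (j.val*5+k.val) 0

set_option maxRecDepth 10000 in
theorem UNIQ : ∀ x j k : Fin 5, memTB x j k = true → x = pairIdx j k := by decide

def CB (ρ : Equiv.Perm (Fin 5)) : Bool :=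
  TTable.all fun p => TTable.all fun q =>
    !(p.1 == q.1) || (pairIdx (ρ p.2.1) (ρ p.2.2) == pairIdx (ρ q.2.1) (ρ q.2.2))

set_option maxHeartbeats 2000000 in
set_option maxRecDepth 10000 in
theorem KEY2 : ∀ ρ : Equiv.Perm (Fin 5), CB ρ = true →
    ρ ∈ Glist ∧ ∀ p ∈ TTable, pairIdx (ρ p.2.1) (ρ p.2.2) = ρ p.1 := by
  letI : DecidablePred (fun ρ : Equiv.Perm (Fin 5) => CB ρ = true →
    ρ ∈ Glist ∧ ∀ p ∈ TTable, pairIdx (ρ p.2.1) (ρ p.2.2) = ρ p.1) := fun _ => instDecidableForall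
  decide

set_option maxHeartbeats 1000000 in
set_option maxRecDepth 10000 in
theorem GOODALL : ∀ ρ ∈ Glist, ∀ i j k : Fin 5,
    memTB i j k = true → memTB (ρ i) (ρ j) (ρ k) = true := by decide

set_option maxRecDepth 10000 in
theorem GINV : ∀ ρ ∈ Glist, ρ⁻¹ ∈ Glist := by decide

set_option maxHeartbeats 1000000 in
set_option maxRecDepth 10000 in
theorem GMUL : ∀ x ∈ Glist, ∀ y ∈ Glist, x * y ∈ Glist := by decide

set_option maxRecDepth 10000 in
theorem GONE : (1 : Equiv.Perm (Fin 5)) ∈ Glist := by decide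

set_option maxRecDepth 10000 in
theorem GSIGMA : sigmaPerm ∈ Glist := by decide

set_option maxRecDepth 10000 in
theorem GTAU : tauPerm ∈ Glist := by decide

set_option maxHeartbeats 1000000 in
set_option maxRecDepth 10000 in
theorem GWORD : ∀ x ∈ Glist, ∃ a : Fin 5, ∃ b : Fin 4,
    x = sigmaPerm ^ (a : ℕ) * tauPerm ^ (b : ℕ) := by decide

set_option maxRecDepth 10000 in
theorem GCARD : Glist.toFinset.card = 20 := by decide

theorem mem_closure_iff_Glist (ρ : Equiv.Perm (Fin 5)) :
    ρ ∈ Subgroup.closure ({sigmaPerm, tauPerm} : Set (Equiv.Perm (Fin 5))) ↔ ρ ∈ Glist := by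
  constructor
  · intro h
    have hle : Subgroup.closure ({sigmaPerm, tauPerm} : Set (Equiv.Perm (Fin 5))) ≤
        ⟨⟨⟨{x | x ∈ Glist}, fun ha hb => GMUL _ ha _ hb⟩, GONE⟩, fun ha => GINV _ ha⟩ := by
      rw [Subgroup.closure_le]
      rintro x (rfl | rfl)
      · exact GSIGMA
      · exact GTAU
    exact hle h
  · intro h
    obtain ⟨a, b, rfl⟩ := GWORD ρ h
    have hσ : sigmaPerm ∈ Subgroup.closure ({sigmaPerm, tauPerm} : Set (Equiv.Perm (Fin 5))) :=
      Subgroup.subset_closure (by simp)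
    have hτ : tauPerm ∈ Subgroup.closure ({sigmaPerm, tauPerm} : Set (Equiv.Perm (Fin 5))) :=
      Subgroup.subset_closure (by simp)
    exact mul_mem (pow_mem hσ _) (pow_mem hτ _)

def isMC (a : LineC) : Prop := ∃ b c d : LineC, c ≠ d ∧ Conc a b c ∧ Conc a b d

set_option maxRecDepth 10000 in
set_option maxHeartbeats 2000000 in
theorem ISM : ∀ a : LineC, (∃ b c d : LineC, c ≠ d ∧ ConcB a b c = true ∧ ConcB a b d = true)
    ↔ ∃ i : Fin 5, a = Sum.inr i := by decide

theorem isMC_iff (a : LineC) : isMC a ↔ ∃ i : Fin 5, a = Sum.inr i := by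
  rw [← ISM]; unfold isMC; simp only [concB_iff]

theorem isMC_apply (φ : Equiv.Perm LineC) (hφ : IsAut φ) (a : LineC) :
    isMC a ↔ isMC (φ a) := by
  constructor
  · rintro ⟨b, c, d, hcd, h1, h2⟩
    exact ⟨φ b, φ c, φ d, fun h => hcd (φ.injective h), (hφ a b c).mp h1, (hφ a b d).mp h2⟩
  · rintro ⟨b, c, d, hcd, h1, h2⟩
    refine ⟨φ.symm b, φ.symm c, φ.symm d, fun h => hcd (φ.symm.injective h), ?_, ?_⟩
    · exact (hφ a _ _).mpr (by rwa [Equiv.apply_symm_apply, Equiv.apply_symm_apply])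
    · exact (hφ a _ _).mpr (by rwa [Equiv.apply_symm_apply, Equiv.apply_symm_apply])

theorem main1 (φ : Equiv.Perm LineC) (hφ : IsAut φ) :
    ∃ ρ : Equiv.Perm (Fin 5), ρ ∈ Glist ∧
      (∀ i, φ (Sum.inl i) = Sum.inl (ρ i)) ∧ (∀ i, φ (Sum.inr i) = Sum.inr (ρ i)) := by
  have hMM : ∀ i : Fin 5, ∃ j, φ (Sum.inr i) = Sum.inr j := by
    intro i
    have h : isMC (Sum.inr i) := (isMC_iff _).mpr ⟨i, rfl⟩
    exact (isMC_iff _).mp ((isMC_apply φ hφ _).mp h)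
  have hLL : ∀ i : Fin 5, ∃ j, φ (Sum.inl i) = Sum.inl j := by
    intro i
    rcases h : φ (Sum.inl i) with j | j
    · exact ⟨j, rfl⟩
    · exfalso
      have h2 : isMC (φ (Sum.inl i)) := (isMC_iff _).mpr ⟨j, h⟩
      obtain ⟨k, hk⟩ := (isMC_iff _).mp ((isMC_apply φ hφ _).mpr h2)
      simp at hk
  choose μ0 hμ0 using hMM
  choose ρ0 hρ0 using hLL
  have hρinj : Function.Injective ρ0 := by
    intro x y h
    have h2 : φ (Sum.inl x) = φ (Sum.inl y) := by rw [hρ0, hρ0, h]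
    simpa using φ.injective h2
  let ρE : Equiv.Perm (Fin 5) := Equiv.ofBijective ρ0 (Finite.injective_iff_bijective.mp hρinj)
  have hρE : ∀ i, ρE i = ρ0 i := fun i => rfl
  have hgood : ∀ p ∈ TTable, memTB (μ0 p.1) (ρ0 p.2.1) (ρ0 p.2.2) = true := by
    intro p hp
    have h1 : Conc (Sum.inr p.1) (Sum.inl p.2.1) (Sum.inl p.2.2) :=
      (conc_rll _ _ _).mpr (memTB_of_mem (show (p.1, p.2.1, p.2.2) ∈ TTable from hp))
    have h2 := (hφ _ _ _).mp h1
    rw [hρ0, hρ0, hμ0] at h2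
    exact (conc_rll _ _ _).mp h2
  have hpair : ∀ p ∈ TTable, μ0 p.1 = pairIdx (ρ0 p.2.1) (ρ0 p.2.2) :=
    fun p hp => UNIQ _ _ _ (hgood p hp)
  have hCB : CB ρE = true := by
    simp only [CB, List.all_eq_true]
    intro p hp q hq
    rw [Bool.or_eq_true]
    by_cases h : p.1 = q.1
    · right
      rw [beq_iff_eq, hρE, hρE, hρE, hρE, ← hpair p hp, ← hpair q hq, h]
    · left
      simp [h]
  obtain ⟨hmemG, hpair2⟩ := KEY2 ρE hCB
  have hμρ : ∀ i, μ0 i = ρE i := by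
    intro i
    fin_cases i
    · exact (hpair (0,1,4) (by decide)).trans (hpair2 (0,1,4) (by decide))
    · exact (hpair (1,0,2) (by decide)).trans (hpair2 (1,0,2) (by decide))
    · exact (hpair (2,0,4) (by decide)).trans (hpair2 (2,0,4) (by decide))
    · exact (hpair (3,0,1) (by decide)).trans (hpair2 (3,0,1) (by decide))
    · exact (hpair (4,0,3) (by decide)).trans (hpair2 (4,0,3) (by decide))
  exact ⟨ρE, hmemG, fun i => hρ0 i, fun i => by rw [hμ0, hμρ]⟩

theorem goodAut (ρ μ : Equiv.Perm (Fin 5))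
    (hg : ∀ i j k, memTB i j k = true → memTB (μ i) (ρ j) (ρ k) = true)
    (hg' : ∀ i j k, memTB i j k = true → memTB (μ⁻¹ i) (ρ⁻¹ j) (ρ⁻¹ k) = true) :
    IsAut (Equiv.sumCongr ρ μ) := by
  have key : ∀ i j k, memTB i j k = true ↔ memTB (μ i) (ρ j) (ρ k) = true := by
    intro i j k
    refine ⟨hg i j k, fun h => ?_⟩
    have h2 := hg' _ _ _ h
    simpa using h2
  intro a b c
  rw [concB_iff, concB_iff]
  rcases a with x | x <;> rcases b with y | y <;> rcases c with z | z <;>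
    simp only [Equiv.sumCongr_apply, Sum.map_inl, Sum.map_inr]
  · exact Iff.rfl
  · exact key z x y
  · exact key y x z
  · exact Iff.rfl
  · exact key x y z
  · exact Iff.rfl
  · exact Iff.rfl
  · simp only [ConcB, Bool.and_eq_true, decide_eq_true_iff, ne_eq,
      EmbeddingLike.apply_eq_iff_eq]

/-- Every automorphism of `𝒞` is of the form `L_i ↦ L_{ρ(i)}`, `M_i ↦ M_{ρ(i)}` for a
unique `ρ` in the subgroup `G ≤ S₅` generated by the 5-cycle `(1 2 3 4 5)` and the
4-cycle `(2 4 5 3)`; conversely every `ρ ∈ G` gives an automorphism; and `Aut(𝒞)` has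
order exactly `20`. -/
theorem stmt_8 :
    (∀ φ : Equiv.Perm LineC, IsAut φ →
      ∃! ρ : Equiv.Perm (Fin 5),
        ρ ∈ Subgroup.closure ({sigmaPerm, tauPerm} : Set (Equiv.Perm (Fin 5))) ∧
        (∀ i, φ (Sum.inl i) = Sum.inl (ρ i)) ∧ (∀ i, φ (Sum.inr i) = Sum.inr (ρ i))) ∧
    (∀ ρ : Equiv.Perm (Fin 5),
      ρ ∈ Subgroup.closure ({sigmaPerm, tauPerm} : Set (Equiv.Perm (Fin 5))) →
      IsAut (Equiv.sumCongr ρ ρ)) ∧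
    Nat.card {φ : Equiv.Perm LineC // IsAut φ} = 20 := by
  have aut_of_mem : ∀ ρ ∈ Glist, IsAut (Equiv.sumCongr ρ ρ) := fun ρ h =>
    goodAut ρ ρ (GOODALL ρ h) (GOODALL ρ⁻¹ (GINV ρ h))
  refine ⟨?_, ?_, ?_⟩
  · intro φ hφ
    obtain ⟨ρ, hmem, h1, h2⟩ := main1 φ hφ
    refine ⟨ρ, ⟨(mem_closure_iff_Glist ρ).mpr hmem, h1, h2⟩, ?_⟩
    rintro ρ' ⟨-, h1', -⟩
    refine Equiv.ext fun i => ?_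
    have h3 := (h1' i).symm.trans (h1 i)
    simpa using h3
  · intro ρ hmem
    exact aut_of_mem ρ ((mem_closure_iff_Glist ρ).mp hmem)
  · have hbij : Function.Bijective
        (fun ρ : {ρ : Equiv.Perm (Fin 5) // ρ ∈ Glist} =>
          (⟨Equiv.sumCongr ρ.1 ρ.1, aut_of_mem ρ.1 ρ.2⟩ : {φ : Equiv.Perm LineC // IsAut φ})) := by
      constructor
      · rintro ⟨ρ, hρ⟩ ⟨ρ', hρ'⟩ h
        have h2 : Equiv.sumCongr ρ ρ = Equiv.sumCongr ρ' ρ' := congrArg Subtype.val h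
        refine Subtype.ext (Equiv.ext fun i => ?_)
        have h3 := congrArg (fun e : Equiv.Perm LineC => e (Sum.inl i)) h2
        simpa using h3
      · rintro ⟨φ, hφ⟩
        obtain ⟨ρ, hmem, h1, h2⟩ := main1 φ hφ
        refine ⟨⟨ρ, hmem⟩, Subtype.ext (Equiv.ext ?_)⟩
        rintro (i | i)
        · simpa using (h1 i).symm
        · simpa using (h2 i).symm
    rw [← Nat.card_eq_of_bijective _ hbij]
    rw [Nat.card_congr (Equiv.subtypeEquivRight
      (fun ρ : Equiv.Perm (Fin 5) => (List.mem_toFinset (a := ρ) (l := Glist)).symm))]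
    rw [Nat.card_eq_fintype_card, Fintype.card_coe]
    exact GCARD
end

section
/- There is no g ∈ GL(3,ℂ) whose induced projective transformation of ℙ²(ℂ) maps each line of 𝒞⁺ onto the correspondingly labeled line of 𝒞⁻, i.e., maps M_i of 𝒞⁺ onto M_i of 𝒞⁻ and L_i of 𝒞⁺ onto L_i of 𝒞⁻ for all i = 1,…,5. (In particular, the ordered arrangements 𝒞⁺ and 𝒞⁻ define two distinct points of the ordered moduli space.) -/
open scoped LinearAlgebra.Projectivization

/-- The complex projective plane `ℙ²(ℂ)`, the projectivization of `ℂ³`. -/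
abbrev Pt := ℙ ℂ (Fin 3 → ℂ)

/-- The projective line `{[x:y:z] | a·x + b·y + c·z = 0}` in `ℙ²(ℂ)` determined by the
linear form with coefficients `(a, b, c)`.  (Vanishing of a linear form is independent
of the choice of homogeneous coordinates, so testing it on `p.rep` is equivalent to
testing it on any representative.) -/
def pline (a b c : ℂ) : Set Pt :=
  {p | a * p.rep 0 + b * p.rep 1 + c * p.rep 2 = 0}

/-- The lines `M₁,…,M₅` of the arrangement `𝒞_γ` (0-based: `Mline γ i = M_{i+1}`):
`M₁: z=0`, `M₂: x=0`, `M₃: x=z`, `M₄: x=−(γ+1)z`, `M₅: x=(γ+2)z`. -/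
noncomputable def Mline (γ : ℝ) : Fin 5 → Set Pt :=
  ![pline 0 0 1, pline 1 0 0, pline 1 0 (-1),
    pline 1 0 ((γ : ℂ) + 1), pline 1 0 (-((γ : ℂ) + 2))]

/-- The lines `L₁,…,L₅` of the arrangement `𝒞_γ` (0-based: `Lline γ i = L_{i+1}`):
`L₁: y=x`, `L₂: y=γ(x−z)`, `L₃: y=γx+z`, `L₄: y=z`, `L₅: y=0`. -/
noncomputable def Lline (γ : ℝ) : Fin 5 → Set Pt :=
  ![pline 1 (-1) 0, pline (γ : ℂ) (-1) (-(γ : ℂ)), pline (γ : ℂ) (-1) 1,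
    pline 0 1 (-1), pline 0 1 0]

/-- `γ⁺ = (−1+√5)/2`. -/
noncomputable def γplus : ℝ := (-1 + Real.sqrt 5) / 2

/-- `γ⁻ = (−1−√5)/2`. -/
noncomputable def γminus : ℝ := (-1 - Real.sqrt 5) / 2

/-!
A projective transformation preserving the lines `z = 0`, `x = 0`, `y = 0` and `x = z`
fixes the points `[1:0:0]` and `[0:0:1]` and acts on the line `y = 0` by a scalar, hence
as the identity. It therefore sends the point `[-a:0:1]` of the line `x + a z = 0` to
itself, so it can map that line onto `x + b z = 0` only when `a = b`. For the `M₄`'s of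
`𝒞⁺` and `𝒞⁻` this would force `γ⁺ = γ⁻`.
-/

lemma mem_pline_mk (a b c : ℂ) (v : Fin 3 → ℂ) (hv : v ≠ 0) :
    Projectivization.mk ℂ v hv ∈ pline a b c ↔ a * v 0 + b * v 1 + c * v 2 = 0 := by
  obtain ⟨t, ht⟩ := Projectivization.exists_smul_eq_mk_rep ℂ v hv
  have hrep : ∀ i, (Projectivization.mk ℂ v hv).rep i = (t : ℂ) * v i := fun i => by
    rw [← ht]; rfl
  rw [pline, Set.mem_ofPred_eq, hrep, hrep, hrep,
    show ∀ x y z : ℂ, a * (t * x) + b * (t * y) + c * (t * z) = t * (a * x + b * y + c * z)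
      from fun _ _ _ => by ring, mul_eq_zero]
  simp [t.ne_zero]

section

variable {f : (Fin 3 → ℂ) →ₗ[ℂ] (Fin 3 → ℂ)} {hf : Function.Injective f}

lemma apply_mem_pline_of_image_eq {a b c a' b' c' : ℂ}
    (h : Projectivization.map f hf '' pline a b c = pline a' b' c')
    (v : Fin 3 → ℂ) (hv : v ≠ 0) (hvmem : a * v 0 + b * v 1 + c * v 2 = 0) :
    a' * f v 0 + b' * f v 1 + c' * f v 2 = 0 := by
  have himg : Projectivization.map f hf (Projectivization.mk ℂ v hv) ∈ pline a' b' c' :=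
    h ▸ ⟨_, (mem_pline_mk a b c v hv).mpr hvmem, rfl⟩
  rw [Projectivization.map_mk] at himg
  exact (mem_pline_mk a' b' c' _ _).mp himg

lemma eq_of_image_pline_eq {a b : ℂ}
    (hz : Projectivization.map f hf '' pline 0 0 1 = pline 0 0 1)
    (hx : Projectivization.map f hf '' pline 1 0 0 = pline 1 0 0)
    (hy : Projectivization.map f hf '' pline 0 1 0 = pline 0 1 0)
    (hxz : Projectivization.map f hf '' pline 1 0 (-1) = pline 1 0 (-1))
    (hab : Projectivization.map f hf '' pline 1 0 a = pline 1 0 b) :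
    a = b := by
  set e₀ : Fin 3 → ℂ := ![1, 0, 0]
  set e₂ : Fin 3 → ℂ := ![0, 0, 1]
  have he₀ : e₀ ≠ 0 := fun h => by simpa [e₀] using congrFun h 0
  have he₂ : e₂ ≠ 0 := fun h => by simpa [e₂] using congrFun h 2
  have h₀₁ : f e₀ 1 = 0 := by
    simpa using apply_mem_pline_of_image_eq hy e₀ he₀ (by simp [e₀])
  have h₀₂ : f e₀ 2 = 0 := by
    simpa using apply_mem_pline_of_image_eq hz e₀ he₀ (by simp [e₀])
  have h₂₀ : f e₂ 0 = 0 := by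
    simpa using apply_mem_pline_of_image_eq hx e₂ he₂ (by simp [e₂])
  have h₀₀ : f e₀ 0 ≠ 0 := by
    intro h₀₀
    refine he₀ (hf ?_)
    rw [map_zero]
    funext i
    fin_cases i <;> simp [h₀₀, h₀₁, h₀₂]
  -- i.e. `f` restricts to a scalar on the plane `y = 0`
  have hscalar : f e₀ 0 = f e₂ 2 := by
    have := apply_mem_pline_of_image_eq hxz (e₀ + e₂)
      (fun h => by simpa [e₀, e₂] using congrFun h 0) (by simp [e₀, e₂])
    simp only [map_add, Pi.add_apply, h₀₂, h₂₀] at this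
    linear_combination this
  have hpt := apply_mem_pline_of_image_eq hab ((-a) • e₀ + e₂)
    (fun h => by simpa [e₀, e₂] using congrFun h 2) (by simp [e₀, e₂])
  simp only [map_add, map_smul, Pi.add_apply, Pi.smul_apply, smul_eq_mul, h₀₂, h₂₀,
    ← hscalar] at hpt
  exact mul_right_cancel₀ h₀₀ (by linear_combination -hpt)

end

lemma γplus_ne_γminus : γplus ≠ γminus := by
  have : 0 < Real.sqrt 5 := Real.sqrt_pos.mpr (by norm_num)
  unfold γplus γminus
  intro h
  linarith

/-- There is no invertible linear map `g` of `ℂ³` whose induced projective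
transformation of `ℙ²(ℂ)` maps each line of `𝒞⁺ = 𝒞_{γ⁺}` onto the correspondingly
labeled line of `𝒞⁻ = 𝒞_{γ⁻}` (i.e. `M_i ↦ M_i` and `L_i ↦ L_i` for all `i`); so the
ordered arrangements `𝒞⁺` and `𝒞⁻` give two distinct points of the ordered moduli
space. -/
theorem stmt_12 :
    ¬ ∃ g : (Fin 3 → ℂ) ≃ₗ[ℂ] (Fin 3 → ℂ),
      (∀ i : Fin 5, Projectivization.map (g : (Fin 3 → ℂ) →ₗ[ℂ] (Fin 3 → ℂ)) g.injective ''
        Mline γplus i = Mline γminus i) ∧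
      (∀ i : Fin 5, Projectivization.map (g : (Fin 3 → ℂ) →ₗ[ℂ] (Fin 3 → ℂ)) g.injective ''
        Lline γplus i = Lline γminus i) := by
  rintro ⟨g, hM, hL⟩
  have h := eq_of_image_pline_eq (hM 0) (hM 1) (hL 4) (hM 2) (hM 3)
  exact γplus_ne_γminus (by exact_mod_cast add_right_cancel h)
end

section
/- Let γ = (−1+√5)/2 (so γ² + γ − 1 = 0) and consider the eleven lines of ℋ_γ in ℙ²(ℂ). Every permutation φ of the set of these eleven lines with the property that any three distinct lines of ℋ_γ have a common point if and only if their φ-images have a common point, is the identity permutation. (The same holds for γ = (−1−√5)/2; i.e., the automorphism group of the combinatorics ℋ is trivial.) -/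
/-!
A permutation of the lines that preserves concurrency of triples preserves every colouring
obtained by repeatedly recolouring a line with the sum, over the pairs of lines concurrent with
it, of the products of their colours. Concurrency of three lines is the vanishing of the
determinant of their coefficient vectors, which lie in `ℤ[γ]`; as `γ` is irrational, this
determinant can be computed exactly in `ℤ[γ]`. Three rounds of recolouring, starting from the
constant colouring, already give the eleven lines pairwise distinct colours, so the permutation
is the identity.
-/

open scoped LinearAlgebra.Projectivization

/-- The extra line `N_γ : γx + (γ+1)y + z = 0` of the arrangement `ℋ_γ = 𝒞_γ ∪ {N_γ}`. -/
noncomputable def Nline (γ : ℝ) : Set Pt := pline (γ : ℂ) ((γ : ℂ) + 1) 1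

/-- Index type for the eleven lines of `ℋ_γ`: `some (Sum.inl i) = L_{i+1}`,
`some (Sum.inr i) = M_{i+1}`, `none = N_γ`. -/
abbrev HIdx := Option (Fin 5 ⊕ Fin 5)

/-- The eleven lines of the arrangement `ℋ_γ = 𝒞_γ ∪ {N_γ}`. -/
noncomputable def Hline (γ : ℝ) : HIdx → Set Pt :=
  fun a => Option.elim a (Nline γ) (Sum.elim (Lline γ) (Mline γ))

open scoped Matrix QuadraticAlgebra

theorem mem_pline_iff (u : Fin 3 → ℂ) (p : Pt) :
    p ∈ pline (u 0) (u 1) (u 2) ↔ u ⬝ᵥ p.rep = 0 := by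
  simp [pline, dotProduct, Fin.sum_univ_three]

theorem mem_pline_mk_iff (u : Fin 3 → ℂ) {v : Fin 3 → ℂ} (hv : v ≠ 0) :
    Projectivization.mk ℂ v hv ∈ pline (u 0) (u 1) (u 2) ↔ u ⬝ᵥ v = 0 := by
  obtain ⟨a, ha⟩ := Projectivization.exists_smul_eq_mk_rep ℂ v hv
  rw [mem_pline_iff, ← ha, dotProduct_smul, Units.smul_def, smul_eq_zero]
  simp

theorem pline_inter_nonempty_iff (u v w : Fin 3 → ℂ) :
    (pline (u 0) (u 1) (u 2) ∩ pline (v 0) (v 1) (v 2) ∩ pline (w 0) (w 1) (w 2)).Nonempty ↔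
      u ⬝ᵥ v ⨯₃ w = 0 := by
  have hmulVec (x : Fin 3 → ℂ) :
      Matrix.of ![u, v, w] *ᵥ x = 0 ↔ u ⬝ᵥ x = 0 ∧ v ⬝ᵥ x = 0 ∧ w ⬝ᵥ x = 0 := by
    simp [funext_iff, Fin.forall_fin_succ]
  have hdet : (Matrix.of ![u, v, w]).det = u ⬝ᵥ v ⨯₃ w := (triple_product_eq_det u v w).symm
  rw [← hdet, ← Matrix.exists_mulVec_eq_zero_iff]
  constructor
  · rintro ⟨p, ⟨hu, hv⟩, hw⟩
    rw [mem_pline_iff] at hu hv hw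
    exact ⟨p.rep, p.rep_nonzero, (hmulVec _).2 ⟨hu, hv, hw⟩⟩
  · rintro ⟨x, hx, hMx⟩
    obtain ⟨hu, hv, hw⟩ := (hmulVec x).1 hMx
    exact ⟨Projectivization.mk ℂ x hx,
      ⟨(mem_pline_mk_iff u hx).2 hu, (mem_pline_mk_iff v hx).2 hv⟩, (mem_pline_mk_iff w hx).2 hw⟩

theorem irrational_of_sq_add_self_sub_one_eq_zero {γ : ℝ} (hγ : γ ^ 2 + γ - 1 = 0) :
    Irrational γ := by
  have hsq : (2 * γ + 1) ^ 2 = √5 ^ 2 := by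
    rw [Real.sq_sqrt (by norm_num)]
    linear_combination 4 * hγ
  have h5 : Irrational √5 := Nat.Prime.irrational_sqrt (p := 5) (by norm_num)
  have h : Irrational (2 * γ + 1) := by
    rcases sq_eq_sq_iff_eq_or_eq_neg.1 hsq with h | h <;> rw [h]
    exacts [h5, h5.neg]
  refine (Irrational.of_add_intCast 1 ?_).of_mul_intCast 2
  convert h using 1
  push_cast
  ring

/-- `ℤ[γ]` for a root `γ` of `X² + X - 1`, with `ω` standing for `γ`. -/
abbrev GoldenInt := QuadraticAlgebra ℤ 1 (-1)

noncomputable def goldenEval {γ : ℝ} (hγ : γ ^ 2 + γ - 1 = 0) : GoldenInt →+* ℂ :=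
  (QuadraticAlgebra.lift ⟨(γ : ℂ), by
    have hγℂ : (γ : ℂ) ^ 2 + γ - 1 = 0 := mod_cast congrArg Complex.ofReal hγ
    simp only [one_smul, neg_smul]
    linear_combination hγℂ⟩).toRingHom

theorem goldenEval_apply {γ : ℝ} (hγ : γ ^ 2 + γ - 1 = 0) (z : GoldenInt) :
    goldenEval hγ z = ((z.re + z.im * γ : ℝ) : ℂ) := by
  simp [goldenEval, zsmul_eq_mul]

theorem goldenEval_omega {γ : ℝ} (hγ : γ ^ 2 + γ - 1 = 0) : goldenEval hγ ω = γ := by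
  simp [goldenEval_apply]

theorem goldenEval_injective {γ : ℝ} (hγ : γ ^ 2 + γ - 1 = 0) :
    Function.Injective (goldenEval hγ) := by
  refine (injective_iff_map_eq_zero _).2 fun z hz => ?_
  rw [goldenEval_apply, Complex.ofReal_eq_zero] at hz
  have him : z.im = 0 := by
    by_contra him
    exact ((irrational_of_sq_add_self_sub_one_eq_zero hγ).mul_intCast him).add_intCast z.re
      |>.ne_zero (by linear_combination hz)
  have hre : z.re = 0 := by simpa [him] using hz
  exact QuadraticAlgebra.ext hre him

def HIdx.elim {β : Type*} (n : β) (l m : Fin 5 → β) (a : HIdx) : β :=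
  Option.elim a n (Sum.elim l m)

def coeffVec : HIdx → Fin 3 → GoldenInt :=
  HIdx.elim ![ω, ω + 1, 1]
    ![![1, -1, 0], ![ω, -1, -ω], ![ω, -1, 1], ![0, 1, -1], ![0, 1, 0]]
    ![![0, 0, 1], ![1, 0, 0], ![1, 0, -1], ![1, 0, ω + 1], ![1, 0, -(ω + 2)]]

theorem Hline_eq_pline {γ : ℝ} (hγ : γ ^ 2 + γ - 1 = 0) (a : HIdx) :
    Hline γ a = pline (goldenEval hγ (coeffVec a 0)) (goldenEval hγ (coeffVec a 1))
      (goldenEval hγ (coeffVec a 2)) := by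
  rcases a with _ | i | i
  · simp [Hline, Nline, coeffVec, HIdx.elim, goldenEval_omega]
  · fin_cases i <;> simp [Hline, Lline, coeffVec, HIdx.elim, goldenEval_omega]
  · fin_cases i <;> simp [Hline, Mline, coeffVec, HIdx.elim, goldenEval_omega, map_ofNat]

def Concurrent (a b c : HIdx) : Prop := coeffVec a ⬝ᵥ coeffVec b ⨯₃ coeffVec c = 0

instance (a b c : HIdx) : Decidable (Concurrent a b c) := by unfold Concurrent; infer_instance

theorem RingHom.map_triple_product {R S : Type*} [CommRing R] [CommRing S] (f : R →+* S)
    (u v w : Fin 3 → R) : (f ∘ u) ⬝ᵥ (f ∘ v) ⨯₃ (f ∘ w) = f (u ⬝ᵥ v ⨯₃ w) := by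
  simp [cross_apply, dotProduct, Fin.sum_univ_three]

theorem Hline_inter_nonempty_iff {γ : ℝ} (hγ : γ ^ 2 + γ - 1 = 0) (a b c : HIdx) :
    (Hline γ a ∩ Hline γ b ∩ Hline γ c).Nonempty ↔ Concurrent a b c := by
  simp only [Hline_eq_pline hγ]
  refine (pline_inter_nonempty_iff (goldenEval hγ ∘ coeffVec a) (goldenEval hγ ∘ coeffVec b)
    (goldenEval hγ ∘ coeffVec c)).trans ?_
  rw [RingHom.map_triple_product, map_eq_zero_iff _ (goldenEval_injective hγ), Concurrent]

namespace TernaryRel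

variable {α : Type*} (R : α → α → α → Prop)

def IsAutomorphism (φ : Equiv.Perm α) : Prop :=
  ∀ a b c, a ≠ b → a ≠ c → b ≠ c → (R a b c ↔ R (φ a) (φ b) (φ c))

variable [Fintype α] [DecidableEq α] [∀ a b c, Decidable (R a b c)]

def partnerPairs (i : α) : Finset (α × α) :=
  {p | i ≠ p.1 ∧ i ≠ p.2 ∧ p.1 ≠ p.2 ∧ R i p.1 p.2}

def recolour (c : α → ℕ) (i : α) : ℕ :=
  ∑ p ∈ partnerPairs R i, c p.1 * c p.2

variable {R}

theorem mem_partnerPairs_apply {φ : Equiv.Perm α} (hφ : IsAutomorphism R φ) (i x y : α) :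
    (φ x, φ y) ∈ partnerPairs R (φ i) ↔ (x, y) ∈ partnerPairs R i := by
  simp only [partnerPairs, Finset.mem_filter, Finset.mem_univ, true_and, φ.injective.ne_iff]
  constructor
  · rintro ⟨hix, hiy, hxy, h⟩
    exact ⟨hix, hiy, hxy, (hφ i x y hix hiy hxy).2 h⟩
  · rintro ⟨hix, hiy, hxy, h⟩
    exact ⟨hix, hiy, hxy, (hφ i x y hix hiy hxy).1 h⟩

theorem partnerPairs_apply {φ : Equiv.Perm α} (hφ : IsAutomorphism R φ) (i : α) :
    partnerPairs R (φ i) = (partnerPairs R i).map (φ.toEmbedding.prodMap φ.toEmbedding) := by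
  ext ⟨x, y⟩
  obtain ⟨x, rfl⟩ := φ.surjective x
  obtain ⟨y, rfl⟩ := φ.surjective y
  rw [mem_partnerPairs_apply hφ]
  exact (Finset.mem_map' (φ.toEmbedding.prodMap φ.toEmbedding)).symm

theorem recolour_apply {φ : Equiv.Perm α} (hφ : IsAutomorphism R φ) {c : α → ℕ}
    (hc : ∀ j, c (φ j) = c j) (i : α) : recolour R c (φ i) = recolour R c i := by
  simp [recolour, partnerPairs_apply hφ, hc]

end TernaryRel

open TernaryRel

/- The iterates `(recolour Concurrent)^[n] 1` for `n = 1, 2, 3`; the third separates all eleven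
lines. -/
def colour₁ : HIdx → ℕ := HIdx.elim 8 ![8, 10, 12, 8, 12] ![16, 18, 16, 20, 16]

def colour₂ : HIdx → ℕ :=
  HIdx.elim 1608 ![1472, 1632, 1856, 1392, 1856] ![4096, 4000, 4032, 4096, 4016]

def colour₃ : HIdx → ℕ :=
  HIdx.elim 50354176 ![54349824, 66274304, 70674432, 55030784, 70685696]
    ![206691328, 213677568, 207172608, 219098112, 207414272]

theorem recolour_one : recolour Concurrent 1 = colour₁ := by decide

theorem recolour_colour₁ : recolour Concurrent colour₁ = colour₂ := by decide

theorem recolour_colour₂ : recolour Concurrent colour₂ = colour₃ := by decide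

theorem colour₃_injective : Function.Injective colour₃ := by decide

/-- For `γ` a root of `γ² + γ − 1 = 0` (i.e. `γ = (−1±√5)/2`), every permutation `φ` of
the eleven lines of `ℋ_γ` such that any three distinct lines have a common point iff
their `φ`-images have a common point, is the identity: the automorphism group of the
combinatorics `ℋ` is trivial. -/
theorem stmt_14 (γ : ℝ) (hγ : γ ^ 2 + γ - 1 = 0) (φ : Equiv.Perm HIdx)
    (hφ : ∀ a b c : HIdx, a ≠ b → a ≠ c → b ≠ c →
      ((Hline γ a ∩ Hline γ b ∩ Hline γ c).Nonempty ↔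
       (Hline γ (φ a) ∩ Hline γ (φ b) ∩ Hline γ (φ c)).Nonempty)) :
    φ = Equiv.refl HIdx := by
  have hconc : IsAutomorphism Concurrent φ := fun a b c hab hac hbc => by
    simpa only [Hline_inter_nonempty_iff hγ] using hφ a b c hab hac hbc
  have h₁ := recolour_apply hconc (c := 1) fun _ => rfl
  rw [recolour_one] at h₁
  have h₂ := recolour_apply hconc h₁
  rw [recolour_colour₁] at h₂
  have h₃ := recolour_apply hconc h₂
  rw [recolour_colour₂] at h₃
  exact Equiv.ext fun i => colour₃_injective (h₃ i)
end
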